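/- arXiv:2503.09455 — 3 statements merged into one kernel-verified Lean document; each statement's English description precedes it below -/
import Mathlib

section
/- Let 1 → N → G → Γ → 1 be a short exact sequence of groups that splits (i.e., the projection G → Γ admits a section homomorphism). Then every G-invariant homogeneous quasimorphism φ on N extends to a quasimorphism on G, i.e., there exists a quasimorphism φ̂ : G → ℝ with φ̂|_N = φ. -/
def IsQuasimorphism {G : Type*} [Group G] (φ : G → ℝ) : Prop :=
  ∃ C : ℝ, ∀ g h : G, |φ (g * h) - φ g - φ h| ≤ C

def IsHomogeneous {G : Type*} [Group G] (φ : G → ℝ) : Prop :=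
  ∀ (g : G) (n : ℤ), φ (g ^ n) = n * φ g

/-- If the short exact sequence `1 → N → G → Γ → 1` splits, then every
`G`-invariant homogeneous quasimorphism on `N` extends to a quasimorphism on `G`. -/
theorem stmt4 {G Γ : Type*} [Group G] [Group Γ]
    (π : G →* Γ) (hsurj : Function.Surjective π)
    (N : Subgroup G) (hker : π.ker = N)
    (s : Γ →* G) (hs : ∀ γ : Γ, π (s γ) = γ)
    (φ : N → ℝ) (hq : IsQuasimorphism φ) (hh : IsHomogeneous φ)
    (hinv : ∀ (g : G) (x y : N), (y : G) = g * (x : G) * g⁻¹ → φ y = φ x) :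
    ∃ ψ : G → ℝ, IsQuasimorphism ψ ∧ ∀ x : N, ψ x = φ x := by
  have mem : ∀ g : G, g * (s (π g))⁻¹ ∈ N := by
    intro g
    rw [← hker, MonoidHom.mem_ker]
    simp [hs]
  have hN : N.Normal := hker ▸ π.normal_ker
  have memc : ∀ (g : G) (b : N), g * (b : G) * g⁻¹ ∈ N :=
    fun g b => hN.conj_mem _ b.2 g
  refine ⟨fun g => φ ⟨g * (s (π g))⁻¹, mem g⟩, ?_, ?_⟩
  · obtain ⟨C, hC⟩ := hq
    refine ⟨C, fun g h => ?_⟩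
    set a : N := ⟨g * (s (π g))⁻¹, mem g⟩ with ha
    set b : N := ⟨h * (s (π h))⁻¹, mem h⟩ with hb
    set b' : N := ⟨s (π g) * (b : G) * (s (π g))⁻¹, memc _ _⟩ with hb'
    have hkey : (⟨g * h * (s (π (g * h)))⁻¹, mem (g * h)⟩ : N) = a * b' := by
      ext
      simp only [ha, hb, hb', map_mul, Subgroup.coe_mul]
      group
    have hbb' : φ b' = φ b := hinv (s (π g)) b b' rfl
    calc |φ (⟨g * h * (s (π (g * h)))⁻¹, mem (g * h)⟩ : N) - φ a - φ b|
        = |φ (a * b') - φ a - φ b'| := by rw [hkey, hbb']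
      _ ≤ C := hC a b'
  · intro x
    have hx : π (x : G) = 1 := by
      rw [← MonoidHom.mem_ker, hker]; exact x.2
    show φ ⟨(x : G) * (s (π (x : G)))⁻¹, mem x⟩ = φ x
    have : (⟨(x : G) * (s (π (x : G)))⁻¹, mem x⟩ : N) = x := Subtype.ext (by simp [hx])
    rw [this]
end

section
/- Let G be a group. The first relative cohomology H¹_{/b}(G), i.e., the first cohomology of the quotient complex C*(G)/C*_b(G), is isomorphic to the space Q(G) of homogeneous quasimorphisms on G. -/
open Filter Topology

section Quasimorphism

variable {G : Type*} [Group G] {φ ψ : G → ℝ} {C : ℝ}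

lemma IsQuasimorphism.of_abs_sub_le (hφ : IsQuasimorphism φ) {K : ℝ}
    (h : ∀ g, |ψ g - φ g| ≤ K) : IsQuasimorphism ψ := by
  obtain ⟨C, hC⟩ := hφ
  refine ⟨C + 3 * K, fun g k => abs_le.2 ⟨?_, ?_⟩⟩ <;>
  · have := abs_le.1 (hC g k)
    have := abs_le.1 (h (g * k))
    have := abs_le.1 (h g)
    have := abs_le.1 (h k)
    linarith

lemma defect_nonneg (hC : ∀ g h : G, |φ (g * h) - φ g - φ h| ≤ C) : 0 ≤ C :=
  (abs_nonneg _).trans (hC 1 1)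

lemma abs_map_pow_sub_le (hC : ∀ g h : G, |φ (g * h) - φ g - φ h| ≤ C) (g : G) {n : ℕ}
    (hn : 0 < n) : |φ (g ^ n) - n * φ g| ≤ n * C := by
  induction n, hn using Nat.le_induction with
  | base => simpa using defect_nonneg hC
  | succ n _ ih =>
    calc |φ (g ^ (n + 1)) - (n + 1 : ℕ) * φ g|
        = |(φ (g ^ n * g) - φ (g ^ n) - φ g) + (φ (g ^ n) - n * φ g)| := by
          rw [pow_succ]; push_cast; ring_nf
      _ ≤ C + n * C := (abs_add_le _ _).trans (add_le_add (hC _ _) ih)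
      _ = (n + 1 : ℕ) * C := by push_cast; ring

lemma abs_map_inv_add_le (hC : ∀ g h : G, |φ (g * h) - φ g - φ h| ≤ C) (g : G) :
    |φ g⁻¹ + φ g| ≤ C + |φ 1| := by
  have := hC g g⁻¹
  rw [mul_inv_cancel] at this
  calc |φ g⁻¹ + φ g| = |(φ 1 - φ g - φ g⁻¹) - φ 1| := by rw [← abs_neg]; ring_nf
    _ ≤ C + |φ 1| := (abs_sub _ _).trans (add_le_add this le_rfl)

lemma exists_tendsto_map_pow_div (hφ : IsQuasimorphism φ) (g : G) :
    ∃ L, Tendsto (fun n : ℕ => φ (g ^ n) / n) atTop (𝓝 L) := by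
  obtain ⟨C, hC⟩ := hφ
  have hsub : Subadditive fun n => φ (g ^ n) + C := fun m n => by
    have := (le_abs_self _).trans (hC (g ^ m) (g ^ n))
    show φ (g ^ (m + n)) + C ≤ φ (g ^ m) + C + (φ (g ^ n) + C)
    rw [pow_add]
    linarith
  have hbdd : BddBelow (Set.range fun n : ℕ => (φ (g ^ n) + C) / n) := by
    refine ⟨min 0 (φ g - C), Set.forall_mem_range.2 fun n => ?_⟩
    rcases n.eq_zero_or_pos with rfl | hn
    · simp
    · have hn' : (0 : ℝ) < n := by exact_mod_cast hn
      have := (abs_le.1 (abs_map_pow_sub_le hC g hn)).1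
      rw [le_div_iff₀ hn']
      nlinarith [min_le_right 0 (φ g - C), defect_nonneg hC]
  refine ⟨hsub.lim, ?_⟩
  simpa [add_div] using (hsub.tendsto_lim hbdd).sub (tendsto_const_div_atTop_nhds_zero_nat C)

end Quasimorphism

lemma Filter.Tendsto.div_natCast_of_abs_sub_le {a b : ℕ → ℝ} {L K : ℝ}
    (ha : Tendsto (fun n => a n / n) atTop (𝓝 L)) (h : ∀ n, |b n - a n| ≤ K) :
    Tendsto (fun n => b n / n) atTop (𝓝 L) := by
  have hsub : Tendsto (fun n => (b n - a n) / n) atTop (𝓝 0) := by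
    refine squeeze_zero_norm (fun n => ?_) (tendsto_const_div_atTop_nhds_zero_nat K)
    rw [Real.norm_eq_abs, abs_div, Nat.abs_cast]
    exact div_le_div_of_nonneg_right (h n) n.cast_nonneg
  simpa [sub_div] using hsub.add ha

-- Junk (`limUnder` of a divergent sequence) unless `φ` is a quasimorphism.
noncomputable def homogenization {G : Type*} [Group G] (φ : G → ℝ) (g : G) : ℝ :=
  limUnder atTop fun n : ℕ => φ (g ^ n) / n

section Homogenization

variable {G : Type*} [Group G] {φ ψ : G → ℝ} {C : ℝ}

lemma homogenization_eq_of_tendsto {g : G} {L : ℝ}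
    (h : Tendsto (fun n : ℕ => φ (g ^ n) / n) atTop (𝓝 L)) : homogenization φ g = L :=
  h.limUnder_eq

lemma tendsto_homogenization (hφ : IsQuasimorphism φ) (g : G) :
    Tendsto (fun n : ℕ => φ (g ^ n) / n) atTop (𝓝 (homogenization φ g)) :=
  tendsto_nhds_limUnder (exists_tendsto_map_pow_div hφ g)

lemma abs_homogenization_sub_le (hC : ∀ g h : G, |φ (g * h) - φ g - φ h| ≤ C) (g : G) :
    |homogenization φ g - φ g| ≤ C := by
  refine le_of_tendsto (((tendsto_homogenization ⟨C, hC⟩ g).sub_const (φ g)).abs) ?_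
  filter_upwards [eventually_gt_atTop 0] with n hn
  have hn' : (0 : ℝ) < n := by exact_mod_cast hn
  rw [div_sub' hn'.ne', abs_div, abs_of_pos hn', div_le_iff₀' hn']
  exact abs_map_pow_sub_le hC g hn

lemma homogenization_pow (hφ : IsQuasimorphism φ) (g : G) (m : ℕ) :
    homogenization φ (g ^ m) = m * homogenization φ g := by
  rcases m.eq_zero_or_pos with rfl | hm
  · rw [pow_zero, Nat.cast_zero, zero_mul]
    exact homogenization_eq_of_tendsto (by simpa using tendsto_const_div_atTop_nhds_zero_nat (φ 1))
  apply homogenization_eq_of_tendsto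
  have hmul : Tendsto (fun n : ℕ => m * n) atTop atTop := tendsto_id.const_mul_atTop' hm
  refine (((tendsto_homogenization hφ g).comp hmul).const_mul (m : ℝ)).congr fun n => ?_
  have hm' : (m : ℝ) ≠ 0 := by exact_mod_cast hm.ne'
  simp only [Function.comp_apply, ← pow_mul, Nat.cast_mul]
  rw [mul_div_assoc', mul_div_mul_left _ _ hm']

lemma homogenization_inv (hφ : IsQuasimorphism φ) (g : G) :
    homogenization φ g⁻¹ = -homogenization φ g := by
  obtain ⟨C, hC⟩ := hφ
  apply homogenization_eq_of_tendsto
  have := (tendsto_homogenization ⟨C, hC⟩ g).neg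
  simp only [← neg_div] at this
  refine this.div_natCast_of_abs_sub_le (K := C + |φ 1|) fun n => ?_
  simpa [inv_pow] using abs_map_inv_add_le hC (g ^ n)

lemma isHomogeneous_homogenization (hφ : IsQuasimorphism φ) :
    IsHomogeneous (homogenization φ) := by
  intro g n
  obtain ⟨m, rfl | rfl⟩ := n.eq_nat_or_neg
  · simpa using homogenization_pow hφ g m
  · simp [zpow_neg, homogenization_inv hφ, homogenization_pow hφ]

lemma homogenization_add (hφ : IsQuasimorphism φ) (hψ : IsQuasimorphism ψ) :
    homogenization (φ + ψ) = homogenization φ + homogenization ψ := by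
  funext g
  apply homogenization_eq_of_tendsto
  simpa [add_div] using (tendsto_homogenization hφ g).add (tendsto_homogenization hψ g)

lemma homogenization_smul (hφ : IsQuasimorphism φ) (c : ℝ) :
    homogenization (c • φ) = c • homogenization φ := by
  funext g
  apply homogenization_eq_of_tendsto
  simpa [mul_div_assoc] using (tendsto_homogenization hφ g).const_mul c

lemma homogenization_of_isHomogeneous (hφ : IsHomogeneous φ) : homogenization φ = φ := by
  funext g
  apply homogenization_eq_of_tendsto
  refine tendsto_const_nhds.congr' ?_
  filter_upwards [eventually_ne_atTop 0] with n hn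
  rw [← zpow_natCast, hφ, Int.cast_natCast, mul_div_cancel_left₀ _ (Nat.cast_ne_zero.2 hn)]

lemma homogenization_eq_iff (hφ : IsQuasimorphism φ) (hψ : IsQuasimorphism ψ) :
    homogenization φ = homogenization ψ ↔ ∃ C : ℝ, ∀ g, |φ g - ψ g| ≤ C := by
  obtain ⟨Cφ, hCφ⟩ := hφ
  obtain ⟨Cψ, hCψ⟩ := hψ
  constructor
  · intro h
    refine ⟨Cφ + Cψ, fun g => ?_⟩
    calc |φ g - ψ g| ≤ |φ g - homogenization φ g| + |homogenization ψ g - ψ g| := by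
          simpa only [h] using abs_sub_le (φ g) (homogenization φ g) (ψ g)
      _ ≤ Cφ + Cψ := add_le_add ((abs_sub_comm _ _).trans_le (abs_homogenization_sub_le hCφ g))
          (abs_homogenization_sub_le hCψ g)
  · rintro ⟨C, hC⟩
    funext g
    exact homogenization_eq_of_tendsto
      ((tendsto_homogenization ⟨Cψ, hCψ⟩ g).div_natCast_of_abs_sub_le fun n => hC (g ^ n))

end Homogenization

/-- `H¹_{/b}(G) ≅ Q(G)`: a 1-cochain has bounded coboundary iff it is a
quasimorphism, and classes are taken modulo bounded 1-cochains.  Concretely,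
there is an ℝ-linear map `h` (homogenization) on quasimorphisms, landing in and
restricting to the identity on homogeneous quasimorphisms, with
`h φ = h ψ` iff `φ − ψ` is bounded; hence the quotient of quasimorphisms by
bounded 1-cochains is isomorphic to the space `Q(G)` of homogeneous
quasimorphisms. -/
theorem stmt8 {G : Type*} [Group G] :
    ∃ h : (G → ℝ) → (G → ℝ),
      (∀ φ, IsQuasimorphism φ →
        (IsQuasimorphism (h φ) ∧ IsHomogeneous (h φ) ∧
          ∃ C : ℝ, ∀ g, |h φ g - φ g| ≤ C)) ∧
      (∀ φ ψ, IsQuasimorphism φ → IsQuasimorphism ψ →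
        h (φ + ψ) = h φ + h ψ) ∧
      (∀ (c : ℝ) (φ), IsQuasimorphism φ → h (c • φ) = c • h φ) ∧
      (∀ ψ, IsQuasimorphism ψ → IsHomogeneous ψ → h ψ = ψ) ∧
      (∀ φ ψ, IsQuasimorphism φ → IsQuasimorphism ψ →
        (h φ = h ψ ↔ ∃ C : ℝ, ∀ g, |φ g - ψ g| ≤ C)) := by
  refine ⟨homogenization, fun φ hφ => ?_, fun _ _ hφ hψ => homogenization_add hφ hψ,
    fun c _ hφ => homogenization_smul hφ c, fun _ _ hψ => homogenization_of_isHomogeneous hψ,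
    fun _ _ hφ hψ => homogenization_eq_iff hφ hψ⟩
  obtain ⟨C, hC⟩ := hφ
  exact ⟨IsQuasimorphism.of_abs_sub_le ⟨C, hC⟩ (abs_homogenization_sub_le hC),
    isHomogeneous_homogenization ⟨C, hC⟩, C, abs_homogenization_sub_le hC⟩
end

section
/- Let G be a group and suppose an exact sequence 1 → H → G →^F V → 1 with V a real vector space (abelian group) admits a section homomorphism s : V → G. If a cohomology class R ∈ H²(G; ℝ) satisfies R = F*(u) for some nonzero u ∈ H²(V; ℝ), then R does not lie in the image of the comparison map c_G : H²_b(G) → H²(G). -/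
/-!
The section `s` pulls `c` back to a cocycle on `V` that is cohomologous both to `u` and, if `c`
were cohomologous to a bounded cochain, to a bounded cocycle. So it suffices that a bounded real
2-cocycle `b` on an abelian group is a coboundary. Its antisymmetrization `b x z - b z x` is
additive in `x` and bounded, hence zero. For a symmetric cocycle, the coboundary of the diagonal
`x ↦ b x x / 2` is `b` up to the error `(a, d) ↦ b (2a) (2d) / 2`; iterating with the rescaled
diagonals `2⁻ᵏ b (2ᵏx) (2ᵏx)` makes the error geometrically small, and the sum of these
corrections is a primitive of `b`.
-/

section TwoCocycles

variable {M : Type*} [AddCommMonoid M]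

def IsTwoCocycle (b : M → M → ℝ) : Prop :=
  ∀ a d e : M, b d e - b (a + d) e + b a (d + e) - b a d = 0

def twoCoboundary (v : M → ℝ) (a d : M) : ℝ :=
  v d - v (a + d) + v a

theorem isTwoCocycle_twoCoboundary (v : M → ℝ) : IsTwoCocycle (twoCoboundary v) := by
  intro a d e
  simp only [twoCoboundary, add_assoc]
  ring

theorem IsTwoCocycle.add {b b' : M → M → ℝ} (hb : IsTwoCocycle b) (hb' : IsTwoCocycle b') :
    IsTwoCocycle (fun a d => b a d + b' a d) := by
  intro a d e
  linarith [hb a d e, hb' a d e]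

theorem IsTwoCocycle.antisymm_add_left {b : M → M → ℝ} (hb : IsTwoCocycle b) (x y z : M) :
    b (x + y) z - b z (x + y) = (b x z - b z x) + (b y z - b z y) := by
  have h₁ := hb x y z
  have h₂ := hb x z y
  have h₃ := hb z x y
  rw [add_comm z y, add_comm x z] at h₂
  linarith

theorem eq_zero_of_map_add_of_abs_le {f : M → ℝ} (hadd : ∀ x y, f (x + y) = f x + f y)
    {C : ℝ} (hC : ∀ x, |f x| ≤ C) (x : M) : f x = 0 := by
  have hmul : ∀ n : ℕ, (n : ℝ) * |f x| ≤ C := fun n => by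
    have hn : f (n • x) = n • f x := map_nsmul (AddMonoidHom.mk' f hadd) n x
    simpa only [hn, nsmul_eq_mul, abs_mul, Nat.abs_cast] using hC (n • x)
  by_contra hne
  obtain ⟨n, hn⟩ := exists_nat_gt (C / |f x|)
  linarith [(div_lt_iff₀ (abs_pos.2 hne)).1 hn, hmul n]

theorem IsTwoCocycle.symm_of_abs_le {b : M → M → ℝ} (hb : IsTwoCocycle b) {C : ℝ}
    (hC : ∀ a d, |b a d| ≤ C) (x z : M) : b x z = b z x := by
  have hanti : ∀ x, |b x z - b z x| ≤ 2 * C := fun x =>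
    (abs_sub _ _).trans (by linarith [hC x z, hC z x])
  linarith [eq_zero_of_map_add_of_abs_le (fun x y => hb.antisymm_add_left x y z) hanti x]

theorem IsTwoCocycle.twoCoboundary_diag {b : M → M → ℝ} (hb : IsTwoCocycle b)
    (hsymm : ∀ x z, b x z = b z x) (a d : M) :
    twoCoboundary (fun x => b x x) a d = 2 * b a d - b (a + a) (d + d) := by
  have h₁ := hb a a (d + d)
  have h₂ := hb a d d
  have h₃ := hb a d (a + d)
  rw [show d + (a + d) = a + (d + d) by abel] at h₃
  have h₄ := hsymm d (a + d)
  simp only [twoCoboundary]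
  linarith

theorem summable_half_pow_mul_of_abs_le {x : ℕ → ℝ} {C : ℝ} (hx : ∀ k, |x k| ≤ C) :
    Summable fun k => (1 / 2 : ℝ) ^ k * x k :=
  (summable_geometric_two.mul_right C).of_norm_bounded fun k => by
    rw [Real.norm_eq_abs, abs_mul, abs_of_nonneg (by positivity)]
    exact mul_le_mul_of_nonneg_left (hx k) (by positivity)

theorem hasSum_sub_succ {f : ℕ → ℝ} (hf : Summable f) :
    HasSum (fun k => f k - f (k + 1)) (f 0) := by
  have h := hf.hasSum.sub ((summable_nat_add_iff 1).2 hf).hasSum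
  rwa [hf.tsum_eq_zero_add, add_sub_cancel_right] at h

noncomputable def dyadicPrimitive (b : M → M → ℝ) (x : M) : ℝ :=
  (∑' k : ℕ, (1 / 2 : ℝ) ^ k * b (2 ^ k • x) (2 ^ k • x)) / 2

theorem IsTwoCocycle.twoCoboundary_dyadicPrimitive {b : M → M → ℝ} (hb : IsTwoCocycle b)
    {C : ℝ} (hC : ∀ a d, |b a d| ≤ C) (a d : M) :
    twoCoboundary (dyadicPrimitive b) a d = b a d := by
  set f : ℕ → ℝ := fun k => (1 / 2 : ℝ) ^ k * b (2 ^ k • a) (2 ^ k • d)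
  have hdiag : ∀ x, HasSum (fun k : ℕ => (1 / 2 : ℝ) ^ k * b (2 ^ k • x) (2 ^ k • x))
      (2 * dyadicPrimitive b x) := fun x => by
    rw [dyadicPrimitive, mul_div_cancel₀ _ two_ne_zero]
    exact (summable_half_pow_mul_of_abs_le fun k => hC _ _).hasSum
  have htelescope : ∀ k : ℕ,
      (1 / 2 : ℝ) ^ k * b (2 ^ k • d) (2 ^ k • d)
        - (1 / 2 : ℝ) ^ k * b (2 ^ k • (a + d)) (2 ^ k • (a + d))
        + (1 / 2 : ℝ) ^ k * b (2 ^ k • a) (2 ^ k • a) = 2 * (f k - f (k + 1)) := fun k => by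
    have hk := hb.twoCoboundary_diag (hb.symm_of_abs_le hC) (2 ^ k • a) (2 ^ k • d)
    have hdouble : ∀ x : M, 2 ^ (k + 1) • x = 2 ^ k • x + 2 ^ k • x := fun x => by
      rw [pow_succ, mul_two, add_smul]
    simp only [twoCoboundary] at hk
    simp only [f, smul_add, hdouble]
    linear_combination (1 / 2 : ℝ) ^ k * hk
  have hsum := ((hdiag d).sub (hdiag (a + d))).add (hdiag a)
  simp only [htelescope] at hsum
  have hsum_eq := hsum.unique ((hasSum_sub_succ (summable_half_pow_mul_of_abs_le fun k =>
    hC (2 ^ k • a) (2 ^ k • d))).mul_left 2)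
  simp only [twoCoboundary, pow_zero, one_smul, one_mul] at hsum_eq ⊢
  linarith

/-- The comparison map `H²_b(M; ℝ) → H²(M; ℝ)` vanishes for a commutative monoid `M`. -/
theorem IsTwoCocycle.exists_eq_twoCoboundary_of_abs_add_le {u : M → M → ℝ}
    (hu : IsTwoCocycle u) (v₀ : M → ℝ) {C : ℝ}
    (hC : ∀ a d, |u a d + twoCoboundary v₀ a d| ≤ C) :
    ∃ v : M → ℝ, ∀ a d, u a d = twoCoboundary v a d := by
  refine ⟨fun x => dyadicPrimitive (fun a d => u a d + twoCoboundary v₀ a d) x - v₀ x,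
    fun a d => ?_⟩
  have hprimitive := (hu.add (isTwoCocycle_twoCoboundary v₀)).twoCoboundary_dyadicPrimitive hC a d
  simp only [twoCoboundary] at hprimitive ⊢
  linarith

end TwoCocycles

theorem stmt18_general {G V : Type*} [Group G] [AddCommGroup V]
    (F : G → V)
    (s : V → G) (hshom : ∀ a b : V, s (a + b) = s a * s b)
    (hsec : ∀ a : V, F (s a) = a)
    (c : G → G → ℝ)
    (u : V → V → ℝ)
    (hucoc : ∀ a b d : V, u b d - u (a + b) d + u a (b + d) - u a b = 0)
    (hunonzero : ¬ ∃ v : V → ℝ, ∀ a b : V, u a b = v b - v (a + b) + v a)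
    (hpull : ∃ w : G → ℝ, ∀ g h : G,
      c g h = u (F g) (F h) + (w h - w (g * h) + w g)) :
    ¬ ∃ w : G → ℝ, ∃ C : ℝ, ∀ g h : G,
      |c g h - (w h - w (g * h) + w g)| ≤ C := by
  rintro ⟨w₁, C, hC⟩
  obtain ⟨w₀, hw₀⟩ := hpull
  refine hunonzero (IsTwoCocycle.exists_eq_twoCoboundary_of_abs_add_le (C := C) hucoc
    (fun x => w₀ (s x) - w₁ (s x)) fun a d => ?_)
  have hpulled := hC (s a) (s d)
  rw [hw₀, ← hshom, hsec, hsec] at hpulled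
  convert hpulled using 2
  simp only [twoCoboundary]
  ring

/-- Let `1 → H → G → V → 1` be exact with `V` a real vector space, admitting a
section homomorphism `s : V → G`.  If a class `R = [c] ∈ H²(G;ℝ)` equals
`F*(u)` for a 2-cocycle `u` on `V` whose class is nonzero, then `R` is not in
the image of the comparison map `c_G : H²_b(G) → H²(G)`; concretely, `c` is not
cohomologous to any bounded cochain. -/
theorem stmt18 {G V : Type*} [Group G] [AddCommGroup V] [Module ℝ V]
    (F : G → V) (hFhom : ∀ g h : G, F (g * h) = F g + F h)
    (hFsurj : Function.Surjective F)
    (H : Subgroup G) (hker : ∀ g : G, g ∈ H ↔ F g = 0)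
    (s : V → G) (hshom : ∀ a b : V, s (a + b) = s a * s b)
    (hsec : ∀ a : V, F (s a) = a)
    (c : G → G → ℝ)
    (hcoc : ∀ g h k : G, c h k - c (g * h) k + c g (h * k) - c g h = 0)
    (u : V → V → ℝ)
    (hucoc : ∀ a b d : V, u b d - u (a + b) d + u a (b + d) - u a b = 0)
    (hunonzero : ¬ ∃ v : V → ℝ, ∀ a b : V, u a b = v b - v (a + b) + v a)
    (hpull : ∃ w : G → ℝ, ∀ g h : G,
      c g h = u (F g) (F h) + (w h - w (g * h) + w g)) :
    ¬ ∃ w : G → ℝ, ∃ C : ℝ, ∀ g h : G,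
      |c g h - (w h - w (g * h) + w g)| ≤ C :=
  stmt18_general F s hshom hsec c u hucoc hunonzero hpull
end
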